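/- For all agents A, B, every term c, and every formula φ, the formula ((c ⊳ (((A signs c) ∧ (B signs c)) → φ)) ∧ (A signs c) ∧ (B signs c)) → ((A says φ) ∧ (B says φ)) is derivable in the signature logic. -/
import Mathlib


mutual
inductive SigTerm (Ag Pr : Type) (Op : ℕ → Type) : Type where
  | agent : Ag → SigTerm Ag Pr Op
  | op : (n : ℕ) → Op n → (Fin n → SigTerm Ag Pr Op) → SigTerm Ag Pr Op
  | ofFormula : SigFormula Ag Pr Op → SigTerm Ag Pr Op

inductive SigFormula (Ag Pr : Type) (Op : ℕ → Type) : Type where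
  | atom : Pr → SigFormula Ag Pr Op
  | neg : SigFormula Ag Pr Op → SigFormula Ag Pr Op
  | and : SigFormula Ag Pr Op → SigFormula Ag Pr Op → SigFormula Ag Pr Op
  | entails : SigTerm Ag Pr Op → SigFormula Ag Pr Op → SigFormula Ag Pr Op
  | signs : Ag → SigTerm Ag Pr Op → SigFormula Ag Pr Op
  | says : Ag → SigFormula Ag Pr Op → SigFormula Ag Pr Op
end

namespace SigFormula
variable {Ag Pr : Type} {Op : ℕ → Type}
/-- `φ → ψ` abbreviates `¬(φ ∧ ¬ψ)`. -/
def imp (φ ψ : SigFormula Ag Pr Op) : SigFormula Ag Pr Op := .neg (.and φ (.neg ψ))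
end SigFormula

structure SigModel (Ag Pr : Type) (Op : ℕ → Type) (W : Type) where
  Rsig : W → Ag → SigTerm Ag Pr Op → Prop
  Rent : SigTerm Ag Pr Op → W → Prop
  Rsays : W → Ag → W → Prop
  val : W → Pr → Prop

variable {Ag Pr : Type} {Op : ℕ → Type} {W : Type}

def Sat (M : SigModel Ag Pr Op W) : W → SigFormula Ag Pr Op → Prop
  | w, .atom p => M.val w p
  | w, .neg φ => ¬ Sat M w φ
  | w, .and φ ψ => Sat M w φ ∧ Sat M w ψ
  | w, .entails t φ => ∀ w' : W, M.Rent t w' → Sat M w' φ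
  | w, .signs A t => M.Rsig w A t
  | w, .says A φ => ∀ w' : W, M.Rsays w A w' → Sat M w' φ

def Valid (M : SigModel Ag Pr Op W) (φ : SigFormula Ag Pr Op) : Prop :=
  ∀ w : W, Sat M w φ

/-- SC1: for every formula `φ` and world `w`, `(φ,w) ∈ R_⊳` implies `M,w ⊨ φ`. -/
def SC1 (M : SigModel Ag Pr Op W) : Prop :=
  ∀ (φ : SigFormula Ag Pr Op) (w : W), M.Rent (.ofFormula φ) w → Sat M w φ

/-- SC2: `(w,A,t) ∈ R_sig` and `(w,A,w') ∈ R_says` imply `(t,w') ∈ R_⊳`. -/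
def SC2 (M : SigModel Ag Pr Op W) : Prop :=
  ∀ (w : W) (A : Ag) (t : SigTerm Ag Pr Op) (w' : W),
    M.Rsig w A t → M.Rsays w A w' → M.Rent t w'

/-- SC3: `(w,B,t) ∈ R_sig` and `(w,A,w') ∈ R_says` imply `(w',B,t) ∈ R_sig`. -/
def SC3 (M : SigModel Ag Pr Op W) : Prop :=
  ∀ (w : W) (A B : Ag) (t : SigTerm Ag Pr Op) (w' : W),
    M.Rsig w B t → M.Rsays w A w' → M.Rsig w' B t

/-- `φ` is a substitution instance of a propositional tautology: every
boolean valuation of formulas that respects `¬` and `∧` makes `φ` true. -/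
def IsTaut (φ : SigFormula Ag Pr Op) : Prop :=
  ∀ v : SigFormula Ag Pr Op → Bool,
    (∀ ψ, v (.neg ψ) = !(v ψ)) →
    (∀ ψ χ, v (.and ψ χ) = (v ψ && v χ)) →
    v φ = true

/-- Derivability in the signature logic. -/
inductive Deriv {Ag Pr : Type} {Op : ℕ → Type} : SigFormula Ag Pr Op → Prop where
  | ax1 {φ} : IsTaut φ → Deriv φ
  | ax2 (φ : SigFormula Ag Pr Op) : Deriv (.entails (.ofFormula φ) φ)
  | ax3 (t : SigTerm Ag Pr Op) (φ ψ) :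
      Deriv (((SigFormula.entails t φ).and (.entails t (φ.imp ψ))).imp (.entails t ψ))
  | ax4 (A : Ag) (t : SigTerm Ag Pr Op) (φ) :
      Deriv (((SigFormula.signs A t).and (.entails t φ)).imp (.says A φ))
  | ax5 (A : Ag) (φ ψ) :
      Deriv (((SigFormula.says A φ).and (.says A (φ.imp ψ))).imp (.says A ψ))
  | ax6 (A B : Ag) (t : SigTerm Ag Pr Op) :
      Deriv ((SigFormula.signs B t).imp (.says A (.signs B t)))
  | ax7 (A : Ag) (t : SigTerm Ag Pr Op) (φ) :
      Deriv ((SigFormula.entails t φ).imp (.says A (.entails t φ)))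
  | r1 {φ ψ} : Deriv φ → Deriv (φ.imp ψ) → Deriv ψ
  | r2 (t : SigTerm Ag Pr Op) {φ} : Deriv φ → Deriv (.entails t φ)
  | r3 (A : Ag) {φ} : Deriv φ → Deriv (.says A φ)

/-- The model obtained from `M` by replacing the entailment relation by `R`. -/
def SigModel.withEnt (M : SigModel Ag Pr Op W) (R : SigTerm Ag Pr Op → W → Prop) :
    SigModel Ag Pr Op W := { M with Rent := R }

/-- The semantic operator corresponding to `G says`, on sets of worlds. -/
def GSaysStep (M : SigModel Ag Pr Op W) (G : Finset Ag) (X : Set W) : Set W :=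
  {w | ∀ A ∈ G, ∀ w' : W, M.Rsays w A w' → w' ∈ X}

/-- The set of worlds of `M` where `G says^k φ` holds (`k ≥ 1`). -/
def GSaysK (M : SigModel Ag Pr Op W) (G : Finset Ag) (φ : SigFormula Ag Pr Op) (k : ℕ) : Set W :=
  (GSaysStep M G)^[k] {w | Sat M w φ}

/-- The set of worlds of `M` where `G saysᵂ φ` holds. -/
def GSaysOmega (M : SigModel Ag Pr Op W) (G : Finset Ag) (φ : SigFormula Ag Pr Op) : Set W :=
  {w | ∀ k ≥ 1, w ∈ GSaysK M G φ k}

mutual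
/-- Entailment depth of a term. -/
def SigTerm.depth : SigTerm Ag Pr Op → ℕ
  | .agent _ => 0
  | .op _ _ _ => 0
  | .ofFormula φ => φ.depth
/-- Entailment depth of a formula. -/
def SigFormula.depth : SigFormula Ag Pr Op → ℕ
  | .atom _ => 1
  | .neg φ => φ.depth
  | .and φ ψ => max φ.depth ψ.depth
  | .entails t φ => max t.depth φ.depth + 1
  | .signs _ _ => 1
  | .says _ φ => φ.depth
end

/-- `R ≡_k R'`: the relations agree on all terms of entailment depth at most `k`. -/
def EquivK (R R' : SigTerm Ag Pr Op → W → Prop) (k : ℕ) : Prop :=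
  ∀ (t : SigTerm Ag Pr Op) (w : W), t.depth ≤ k → (R t w ↔ R' t w)

/-- The sequence `R⁰ ⊆ R¹ ⊆ ⋯` of approximations to `R^ω`. -/
def RSeq (M : SigModel Ag Pr Op W) (R0 : SigTerm Ag Pr Op → W → Prop) :
    ℕ → SigTerm Ag Pr Op → W → Prop
  | 0 => R0
  | i + 1 => fun t w => RSeq M R0 i t w ∨
      ∃ φ : SigFormula Ag Pr Op, t = .ofFormula φ ∧ φ.depth = i + 1 ∧
        Sat (M.withEnt (RSeq M R0 i)) w φ

/-- The limit `R^ω = ⋃_i R^i`. -/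
def ROmega (M : SigModel Ag Pr Op W) (R0 : SigTerm Ag Pr Op → W → Prop) :
    SigTerm Ag Pr Op → W → Prop :=
  fun t w => ∃ i, RSeq M R0 i t w

section Helpers
variable {Ag Pr : Type} {Op : ℕ → Type}

private lemma taut_k (φ ψ : SigFormula Ag Pr Op) : IsTaut (φ.imp (ψ.imp φ)) := by
  intro v hn ha
  simp only [SigFormula.imp, hn, ha]
  cases v φ <;> cases v ψ <;> rfl

private lemma taut_s (χ φ ψ : SigFormula Ag Pr Op) :
    IsTaut ((χ.imp φ).imp ((χ.imp (φ.imp ψ)).imp (χ.imp ψ))) := by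
  intro v hn ha
  simp only [SigFormula.imp, hn, ha]
  cases v χ <;> cases v φ <;> cases v ψ <;> rfl

private lemma taut_andI (χ φ ψ : SigFormula Ag Pr Op) :
    IsTaut ((χ.imp φ).imp ((χ.imp ψ).imp (χ.imp (φ.and ψ)))) := by
  intro v hn ha
  simp only [SigFormula.imp, hn, ha]
  cases v χ <;> cases v φ <;> cases v ψ <;> rfl

private lemma taut_pair (φ ψ : SigFormula Ag Pr Op) :
    IsTaut (φ.imp (ψ.imp (φ.and ψ))) := by
  intro v hn ha
  simp only [SigFormula.imp, hn, ha]
  cases v φ <;> cases v ψ <;> rfl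

private lemma taut_proj1 (φ ψ : SigFormula Ag Pr Op) : IsTaut ((φ.and ψ).imp φ) := by
  intro v hn ha
  simp only [SigFormula.imp, hn, ha]
  cases v φ <;> cases v ψ <;> rfl

private lemma taut_proj21 (φ ψ χ : SigFormula Ag Pr Op) :
    IsTaut ((φ.and (ψ.and χ)).imp ψ) := by
  intro v hn ha
  simp only [SigFormula.imp, hn, ha]
  cases v φ <;> cases v ψ <;> cases v χ <;> rfl

private lemma taut_proj22 (φ ψ χ : SigFormula Ag Pr Op) :
    IsTaut ((φ.and (ψ.and χ)).imp χ) := by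
  intro v hn ha
  simp only [SigFormula.imp, hn, ha]
  cases v φ <;> cases v ψ <;> cases v χ <;> rfl

private lemma wk {ψ : SigFormula Ag Pr Op} (χ : SigFormula Ag Pr Op)
    (h : Deriv ψ) : Deriv (χ.imp ψ) :=
  Deriv.r1 h (Deriv.ax1 (taut_k ψ χ))

private lemma mp2 {χ φ ψ : SigFormula Ag Pr Op}
    (h1 : Deriv (χ.imp φ)) (h2 : Deriv (χ.imp (φ.imp ψ))) : Deriv (χ.imp ψ) :=
  Deriv.r1 h2 (Deriv.r1 h1 (Deriv.ax1 (taut_s χ φ ψ)))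

private lemma lift {χ φ ψ : SigFormula Ag Pr Op}
    (h : Deriv (φ.imp ψ)) (h1 : Deriv (χ.imp φ)) : Deriv (χ.imp ψ) :=
  mp2 h1 (wk χ h)

private lemma andI {χ φ ψ : SigFormula Ag Pr Op}
    (h1 : Deriv (χ.imp φ)) (h2 : Deriv (χ.imp ψ)) : Deriv (χ.imp (φ.and ψ)) :=
  Deriv.r1 h2 (Deriv.r1 h1 (Deriv.ax1 (taut_andI χ φ ψ)))

/-- Under hypothesis χ we can derive `X says φ`. -/
private lemma says_main (A B X : Ag) (hXab : X = A ∨ X = B)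
    (c : SigTerm Ag Pr Op) (φ : SigFormula Ag Pr Op) :
    letI S : SigFormula Ag Pr Op := (SigFormula.signs A c).and (.signs B c)
    letI χ : SigFormula Ag Pr Op := (SigFormula.entails c (S.imp φ)).and S
    Deriv (χ.imp (.says X φ)) := by
  set S : SigFormula Ag Pr Op := (SigFormula.signs A c).and (.signs B c) with hS
  set χ : SigFormula Ag Pr Op := (SigFormula.entails c (S.imp φ)).and S with hχ
  have hH : Deriv (χ.imp (.entails c (S.imp φ))) := Deriv.ax1 (taut_proj1 _ _)
  have hA : Deriv (χ.imp (.signs A c)) := Deriv.ax1 (taut_proj21 _ _ _)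
  have hB : Deriv (χ.imp (.signs B c)) := Deriv.ax1 (taut_proj22 _ _ _)
  -- χ → X says (S → φ)
  have hX : Deriv (χ.imp (.signs X c)) := by
    rcases hXab with rfl | rfl
    · exact hA
    · exact hB
  have hXimp : Deriv (χ.imp (.says X (S.imp φ))) :=
    lift (Deriv.ax4 X c (S.imp φ)) (andI hX hH)
  -- χ → X says (A signs c), χ → X says (B signs c)
  have hsA : Deriv (χ.imp (.says X (.signs A c))) := lift (Deriv.ax6 X A c) hA
  have hsB : Deriv (χ.imp (.says X (.signs B c))) := lift (Deriv.ax6 X B c) hB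
  -- χ → X says (A signs c → (B signs c → S))
  have hpair : Deriv (χ.imp (.says X ((SigFormula.signs A c).imp
      ((SigFormula.signs B c).imp S)))) :=
    wk χ (Deriv.r3 X (Deriv.ax1 (taut_pair _ _)))
  -- χ → X says (B signs c → S)
  have h1 : Deriv (χ.imp (.says X ((SigFormula.signs B c).imp S))) :=
    lift (Deriv.ax5 X _ _) (andI hsA hpair)
  -- χ → X says S
  have hS : Deriv (χ.imp (.says X S)) := lift (Deriv.ax5 X _ _) (andI hsB h1)
  -- χ → X says φ
  exact lift (Deriv.ax5 X _ _) (andI hS hXimp)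

end Helpers

/-- `((c ⊳ (((A signs c) ∧ (B signs c)) → φ)) ∧ (A signs c) ∧ (B signs c))
→ ((A says φ) ∧ (B says φ))` is derivable. -/
theorem counterpart_abstract (A B : Ag) (c : SigTerm Ag Pr Op) (φ : SigFormula Ag Pr Op) :
    Deriv (((SigFormula.entails c (((SigFormula.signs A c).and (.signs B c)).imp φ)).and
        ((SigFormula.signs A c).and (.signs B c))).imp
      ((SigFormula.says A φ).and (.says B φ))) := by
  exact andI (says_main A B A (Or.inl rfl) c φ) (says_main A B B (Or.inr rfl) c φ)
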